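/- Let r, s > 1 with 1/r + 1/s = 1 and let A = (A^x, A^σ) ∈ ℝ^{d×d_σ} × ℝ^{d_σ×d} satisfy ‖(A^x)ᵀ‖_r ≤ α^x and ‖(A^σ)ᵀ‖_r ≤ α^σ. Then for all X, X̂ ∈ ℝ^{L×d}: ‖ffn(X; A)ᵀ − ffn(X̂; A)ᵀ‖_{r,∞} ≤ (1 + α^x α^σ) · ‖Xᵀ − X̂ᵀ‖_{r,∞}. -/

import Mathlib

open Matrix

/-- The vector `ℓ_r`-norm on `Fin m → ℝ`. -/
noncomputable def lrNorm {m : ℕ} (r : ℝ) (v : Fin m → ℝ) : ℝ :=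
  (∑ i, |v i| ^ r) ^ (1 / r)

/-- The matrix `(r,∞)`-norm: maximum of the `ℓ_r`-norms of the columns. -/
noncomputable def matNormRInf {m n : ℕ} (r : ℝ) (M : Matrix (Fin m) (Fin n) ℝ) : ℝ :=
  ⨆ j, lrNorm r (fun i => M i j)

/-- The `(r,r)`-operator norm `sup_{u ≠ 0} ‖Mu‖_r / ‖u‖_r` (with the convention `0/0 = 0`). -/
noncomputable def matOpNorm {m n : ℕ} (r : ℝ) (M : Matrix (Fin m) (Fin n) ℝ) : ℝ :=
  ⨆ u : Fin n → ℝ, lrNorm r (M.mulVec u) / lrNorm r u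

/-- The two-layer feedforward network with skip connection
`ffn(X; A) = ReLU(XA^x)A^σ + X`. -/
noncomputable def ffn {L d dσ : ℕ} (X : Matrix (Fin L) (Fin d) ℝ)
    (A : Matrix (Fin d) (Fin dσ) ℝ × Matrix (Fin dσ) (Fin d) ℝ) :
    Matrix (Fin L) (Fin d) ℝ :=
  ((X * A.1).map fun t => max t 0) * A.2 + X

lemma lrNorm_nonneg {m : ℕ} (r : ℝ) (v : Fin m → ℝ) : 0 ≤ lrNorm r v :=
  Real.rpow_nonneg (Finset.sum_nonneg fun _ _ => Real.rpow_nonneg (abs_nonneg _) _) _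

lemma lrNorm_mono {m : ℕ} {r : ℝ} (hr : 0 < r) {u v : Fin m → ℝ}
    (h : ∀ i, |u i| ≤ |v i|) : lrNorm r u ≤ lrNorm r v :=
  Real.rpow_le_rpow (Finset.sum_nonneg fun i _ => Real.rpow_nonneg (abs_nonneg _) _)
    (Finset.sum_le_sum fun i _ => Real.rpow_le_rpow (abs_nonneg _) (h i) hr.le)
    (by positivity)

lemma lrNorm_smul {m : ℕ} {r : ℝ} (hr : 0 < r) (t : ℝ) (v : Fin m → ℝ) :
    lrNorm r (fun i => t * v i) = |t| * lrNorm r v := by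
  unfold lrNorm
  have h1 : ∀ i : Fin m, |t * v i| ^ r = |t| ^ r * |v i| ^ r := fun i => by
    rw [abs_mul, Real.mul_rpow (abs_nonneg _) (abs_nonneg _)]
  simp_rw [h1, ← Finset.mul_sum]
  rw [Real.mul_rpow (by positivity)
    (Finset.sum_nonneg fun i _ => Real.rpow_nonneg (abs_nonneg _) _),
    ← Real.rpow_mul (abs_nonneg t), mul_one_div_cancel hr.ne', Real.rpow_one]

lemma lrNorm_eq_zero {m : ℕ} {r : ℝ} (hr : 0 < r) {v : Fin m → ℝ}
    (h : lrNorm r v = 0) : v = 0 := by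
  unfold lrNorm at h
  have hs : ∑ i, |v i| ^ r = 0 :=
    (Real.rpow_eq_zero (Finset.sum_nonneg fun i _ => Real.rpow_nonneg (abs_nonneg _) _)
      (one_div_ne_zero hr.ne')).mp h
  funext i
  have hi := (Finset.sum_eq_zero_iff_of_nonneg
    (fun i _ => Real.rpow_nonneg (abs_nonneg (v i)) r)).mp hs i (Finset.mem_univ i)
  have := (Real.rpow_eq_zero (abs_nonneg (v i)) hr.ne').mp hi
  simpa using abs_eq_zero.mp this

lemma lrNorm_zero {m : ℕ} {r : ℝ} (hr : 0 < r) : lrNorm r (0 : Fin m → ℝ) = 0 := by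
  unfold lrNorm
  simp [Real.zero_rpow hr.ne', Real.zero_rpow (inv_ne_zero hr.ne'),
    Real.zero_rpow (one_div_ne_zero hr.ne')]

lemma abs_le_lrNorm {m : ℕ} {r : ℝ} (hr : 0 < r) (v : Fin m → ℝ) (j : Fin m) :
    |v j| ≤ lrNorm r v := by
  have h1 : |v j| = (|v j| ^ r) ^ (1 / r) := by
    rw [← Real.rpow_mul (abs_nonneg _), mul_one_div_cancel hr.ne', Real.rpow_one]
  rw [h1]
  exact Real.rpow_le_rpow (Real.rpow_nonneg (abs_nonneg _) _)
    (Finset.single_le_sum (fun i _ => Real.rpow_nonneg (abs_nonneg _) _) (Finset.mem_univ j))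
    (by positivity)

lemma lrNorm_add_le {m : ℕ} {r : ℝ} (hr : 1 ≤ r) (u v : Fin m → ℝ) :
    lrNorm r (fun i => u i + v i) ≤ lrNorm r u + lrNorm r v :=
  Real.Lp_add_le Finset.univ u v hr

lemma lrNorm_mulVec_le {n m : ℕ} {r : ℝ} (hr : 0 < r) (B : Matrix (Fin n) (Fin m) ℝ)
    {α : ℝ} (hα : matOpNorm r B ≤ α) (u : Fin m → ℝ) :
    lrNorm r (B.mulVec u) ≤ α * lrNorm r u := by
  have hα0 : 0 ≤ α :=
    le_trans (Real.iSup_nonneg fun w => div_nonneg (lrNorm_nonneg _ _) (lrNorm_nonneg _ _)) hα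
  set C := lrNorm r (fun i : Fin n => ∑ j, |B i j|) with hC
  have hC0 : 0 ≤ C := lrNorm_nonneg _ _
  have key : ∀ w : Fin m → ℝ, lrNorm r (B.mulVec w) ≤ C * lrNorm r w := by
    intro w
    have hw0 : 0 ≤ lrNorm r w := lrNorm_nonneg _ _
    have h1 : ∀ i, |B.mulVec w i| ≤ |lrNorm r w * (∑ j, |B i j|)| := by
      intro i
      have hnn : 0 ≤ lrNorm r w * (∑ j, |B i j|) := by positivity
      rw [abs_of_nonneg hnn]
      calc |B.mulVec w i| ≤ ∑ j, |B i j * w j| := by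
            simpa [Matrix.mulVec, dotProduct] using Finset.abs_sum_le_sum_abs (fun j => B i j * w j) Finset.univ
        _ ≤ ∑ j, |B i j| * lrNorm r w := by
            refine Finset.sum_le_sum fun j _ => ?_
            rw [abs_mul]
            exact mul_le_mul_of_nonneg_left (abs_le_lrNorm hr w j) (abs_nonneg _)
        _ = lrNorm r w * (∑ j, |B i j|) := by rw [← Finset.sum_mul]; ring
    calc lrNorm r (B.mulVec w)
        ≤ lrNorm r (fun i => lrNorm r w * (∑ j, |B i j|)) := lrNorm_mono hr h1
      _ = |lrNorm r w| * C := lrNorm_smul hr _ _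
      _ = C * lrNorm r w := by rw [abs_of_nonneg hw0]; ring
  have hbdd : BddAbove (Set.range fun w : Fin m → ℝ => lrNorm r (B.mulVec w) / lrNorm r w) := by
    refine ⟨C, ?_⟩
    rintro x ⟨w, rfl⟩
    rcases eq_or_ne (lrNorm r w) 0 with h0 | h0
    · simp only [h0, div_zero]; exact hC0
    · have hpos : 0 < lrNorm r w := lt_of_le_of_ne (lrNorm_nonneg _ _) (Ne.symm h0)
      rw [div_le_iff₀ hpos]
      exact key w
  rcases eq_or_ne (lrNorm r u) 0 with h0 | h0
  · have hu : u = 0 := lrNorm_eq_zero hr h0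
    simp [hu, Matrix.mulVec_zero, lrNorm_zero hr, mul_nonneg hα0]
  · have hpos : 0 < lrNorm r u := lt_of_le_of_ne (lrNorm_nonneg _ _) (Ne.symm h0)
    have hle : lrNorm r (B.mulVec u) / lrNorm r u ≤ matOpNorm r B := le_ciSup hbdd u
    rw [← div_le_iff₀ hpos]
    exact le_trans hle hα

/-- Input Lipschitz continuity of the feedforward network. -/
theorem ffn_input_lipschitz
    {L d dσ : ℕ} (r s : ℝ) (hr : 1 < r) (hs : 1 < s) (hrs : 1 / r + 1 / s = 1)
    (A : Matrix (Fin d) (Fin dσ) ℝ × Matrix (Fin dσ) (Fin d) ℝ)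
    (αx ασ : ℝ) (hαx : matOpNorm r A.1ᵀ ≤ αx) (hασ : matOpNorm r A.2ᵀ ≤ ασ)
    (X Xh : Matrix (Fin L) (Fin d) ℝ) :
    matNormRInf r ((ffn X A)ᵀ - (ffn Xh A)ᵀ)
      ≤ (1 + αx * ασ) * matNormRInf r (Xᵀ - Xhᵀ) := by
  have hr0 : 0 < r := zero_lt_one.trans hr
  have hαx0 : 0 ≤ αx :=
    le_trans (Real.iSup_nonneg fun w => div_nonneg (lrNorm_nonneg _ _) (lrNorm_nonneg _ _)) hαx
  have hασ0 : 0 ≤ ασ :=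
    le_trans (Real.iSup_nonneg fun w => div_nonneg (lrNorm_nonneg _ _) (lrNorm_nonneg _ _)) hασ
  set N := matNormRInf r (Xᵀ - Xhᵀ) with hNdef
  have hN0 : 0 ≤ N := Real.iSup_nonneg fun j => lrNorm_nonneg _ _
  refine Real.iSup_le (fun j => ?_) (by positivity)
  set dv : Fin d → ℝ := fun i => X j i - Xh j i with hdv
  have hdN : lrNorm r dv ≤ N := by
    have he : dv = fun i => (Xᵀ - Xhᵀ) i j := by
      funext i; simp [hdv]
    rw [he, hNdef]
    exact le_ciSup (f := fun j' : Fin L => lrNorm r (fun i => (Xᵀ - Xhᵀ) i j'))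
      (Set.Finite.bddAbove (Set.finite_range _)) j
  set w : Fin dσ → ℝ :=
    fun k => max ((X * A.1) j k) 0 - max ((Xh * A.1) j k) 0 with hw
  have hw_le : lrNorm r w ≤ αx * lrNorm r dv := by
    have h1 : ∀ k, |w k| ≤ |(A.1ᵀ.mulVec dv) k| := by
      intro k
      have e : (A.1ᵀ.mulVec dv) k = (X * A.1) j k - (Xh * A.1) j k := by
        simp only [Matrix.mulVec, dotProduct, Matrix.transpose_apply, Matrix.mul_apply, hdv]
        rw [← Finset.sum_sub_distrib]
        exact Finset.sum_congr rfl fun i _ => by ring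
      rw [e]
      exact abs_max_sub_max_le_abs _ _ _
    exact le_trans (lrNorm_mono hr0 h1) (lrNorm_mulVec_le hr0 _ hαx dv)
  have rowmul : ∀ (P : Matrix (Fin dσ) (Fin d) ℝ) (v : Fin dσ → ℝ) (i : Fin d),
      Pᵀ.mulVec v i = ∑ k, v k * P k i := by
    intro P v i
    simp [Matrix.mulVec, dotProduct, Matrix.transpose_apply, mul_comm]
  have hcol : (fun i => ((ffn X A)ᵀ - (ffn Xh A)ᵀ) i j)
      = fun i => (A.2ᵀ.mulVec w) i + dv i := by
    funext i
    rw [Matrix.sub_apply, Matrix.transpose_apply, Matrix.transpose_apply, rowmul]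
    simp only [ffn, Matrix.add_apply, Matrix.mul_apply, Matrix.map_apply, hw, hdv,
      sub_mul, Finset.sum_sub_distrib]
    ring
  calc lrNorm r (fun i => ((ffn X A)ᵀ - (ffn Xh A)ᵀ) i j)
      = lrNorm r (fun i => (A.2ᵀ.mulVec w) i + dv i) := by rw [hcol]
    _ ≤ lrNorm r (A.2ᵀ.mulVec w) + lrNorm r dv := lrNorm_add_le hr.le _ _
    _ ≤ ασ * lrNorm r w + N := add_le_add (lrNorm_mulVec_le hr0 _ hασ w) hdN
    _ ≤ ασ * (αx * N) + N := by
        have h2 : lrNorm r w ≤ αx * N :=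
          le_trans hw_le (mul_le_mul_of_nonneg_left hdN hαx0)
        nlinarith [h2, hασ0]
    _ = (1 + αx * ασ) * N := by ring
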